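/- Let ẑ be an absolute cycle in K̂[b,d] = K̂_b^d (with class [ẑ] ∈ H(K̂[b,d])) that contains vertical cells σ×b and τ×d (nonzero coefficients) with max σ = b and min τ = d. Then ẑ is an apex representative in H(K̂[b,d]), i.e., [ẑ] lies neither in the image of H(K̂[b+1,d]) → H(K̂[b,d]) nor in the image of H(K̂[b,d−1]) → H(K̂[b,d]). -/
import Mathlib


open Finsupp
open scoped Classical

/-- A finite Δ-complex over a field `F`: each cell has a dimension, a boundary chain,
and an integer support interval `T(σ) = [tmin σ, tmax σ] ⊆ [0, n]`; whenever `σ` appears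
in `∂τ` one has `tmin σ < tmin τ < tmax τ < tmax σ`. -/
structure DeltaComplex (F : Type) [Field F] (n : ℤ) where
  Cell : Type
  deq : DecidableEq Cell
  fin : Fintype Cell
  dim : Cell → ℕ
  tmin : Cell → ℤ
  tmax : Cell → ℤ
  bdry : Cell → (Cell →₀ F)
  tmin_nonneg : ∀ σ, 0 ≤ tmin σ
  tmin_lt_tmax : ∀ σ, tmin σ < tmax σ
  tmax_le : ∀ σ, tmax σ ≤ n
  bdry_dim : ∀ τ σ, bdry τ σ ≠ 0 → dim σ + 1 = dim τ
  nest : ∀ τ σ, bdry τ σ ≠ 0 → tmin σ < tmin τ ∧ tmax τ < tmax σ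
  bdry_bdry : ∀ τ, ((bdry τ).sum fun σ a => a • bdry σ) = 0

attribute [instance] DeltaComplex.deq DeltaComplex.fin

variable {F : Type} [Field F] {n : ℤ}

/-- The boundary of a chain of `K`. -/
noncomputable def bd (K : DeltaComplex F n) (c : K.Cell →₀ F) : K.Cell →₀ F :=
  c.sum fun τ a => a • K.bdry τ

/-- A chain is supported on a set of cells. -/
def SuppOn {α β : Type} [Zero β] (c : α →₀ β) (S : α → Prop) : Prop :=
  ∀ x, c x ≠ 0 → S x

/-- Cells of the prism `K̂`: vertical cells `σ×{i}` and horizontal cells `σ×[i,i+1]`. -/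
inductive PCell (C : Type) where
  | vert : C → ℤ → PCell C
  | horiz : C → ℤ → PCell C
deriving DecidableEq

/-- Membership of a prism cell in the prism `K̂`. -/
def inPrism (K : DeltaComplex F n) : PCell K.Cell → Prop
  | .vert σ i => K.tmin σ ≤ i ∧ i ≤ K.tmax σ
  | .horiz σ i => K.tmin σ ≤ i ∧ i + 1 ≤ K.tmax σ

/-- Membership of a prism cell in the interlevel subcomplex `K̂_i^j` (cells `σ×T` with
`T ⊆ [i,j]`). -/
def inSub (K : DeltaComplex F n) (i j : ℤ) : PCell K.Cell → Prop
  | .vert σ t => (K.tmin σ ≤ t ∧ t ≤ K.tmax σ) ∧ i ≤ t ∧ t ≤ j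
  | .horiz σ t => (K.tmin σ ≤ t ∧ t + 1 ≤ K.tmax σ) ∧ i ≤ t ∧ t + 1 ≤ j

/-- The boundary of a single prism cell: `∂(τ×i) = (∂τ)×i` and
`∂(σ×[i,i+1]) = σ×(i+1) − σ×i − (∂σ)×[i,i+1]`. -/
noncomputable def pcellBd (K : DeltaComplex F n) : PCell K.Cell → (PCell K.Cell →₀ F)
  | .vert τ i => (K.bdry τ).sum fun σ a => Finsupp.single (PCell.vert σ i) a
  | .horiz σ i =>
      Finsupp.single (PCell.vert σ (i + 1)) 1 - Finsupp.single (PCell.vert σ i) 1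
        - (K.bdry σ).sum fun ρ a => Finsupp.single (PCell.horiz ρ i) a

/-- The boundary of a prism chain. -/
noncomputable def pbd (K : DeltaComplex F n) (c : PCell K.Cell →₀ F) : PCell K.Cell →₀ F :=
  c.sum fun x a => a • pcellBd K x

/-- `z` is a relative cycle of the pair of subcomplexes `(A, B)` of the prism. -/
def RelCycle (K : DeltaComplex F n) (A B : PCell K.Cell → Prop)
    (z : PCell K.Cell →₀ F) : Prop :=
  SuppOn z A ∧ SuppOn (pbd K z) B

/-- The homology class `[z] ∈ H(A,B)` lies in the image of the map
`H(A',B') → H(A,B)` induced by the inclusion of pairs `(A',B') ⊆ (A,B)`: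
there is a relative cycle `α` of `(A',B')` homologous to `z` within `(A,B)`. -/
def InImg (K : DeltaComplex F n) (A' B' A B : PCell K.Cell → Prop)
    (z : PCell K.Cell →₀ F) : Prop :=
  ∃ α β γ : PCell K.Cell →₀ F,
    RelCycle K A' B' α ∧ SuppOn β A ∧ SuppOn γ B ∧ z = α + pbd K β + γ

/-- The vertical prism chain `w × t`. -/
noncomputable def vchain (K : DeltaComplex F n) (w : K.Cell →₀ F) (t : ℤ) :
    PCell K.Cell →₀ F :=
  w.sum fun σ a => Finsupp.single (PCell.vert σ t) a

/-- A valid choice of times for Lift-Cycle: for every simplex `τ` of `z` with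
`T(τ) ∩ [b,d] ≠ ∅`, the chosen time satisfies `t τ ∈ T(τ) ∩ [b,d]`. -/
def ValidTimes (K : DeltaComplex F n) (z : K.Cell →₀ F) (b d : ℤ) (t : K.Cell → ℤ) : Prop :=
  ∀ τ, z τ ≠ 0 → K.tmin τ ≤ d → b ≤ K.tmax τ →
    K.tmin τ ≤ t τ ∧ t τ ≤ K.tmax τ ∧ b ≤ t τ ∧ t τ ≤ d

/-- The chain `ẑ` produced by `Lift-Cycle(z, (s,f), w₀)` with the choice of times `t`
(here `b = min s f`, `d = max s f`): the sum of the vertical cells `⟨τ,z⟩·(τ×t_τ)` over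
simplices `τ` of `z` with `T(τ) ∩ [b,d] ≠ ∅`, plus horizontal cells `σ×[k,k+1]`
(oriented from `s` to `f`) whose coefficient is the running sum
`⟨σ,w₀⟩ + Σ ⟨τ,z⟩·⟨σ,∂τ⟩` over the cofaces `τ` whose time `t_τ` has already been passed
when traversing from `s` to `f`. -/
noncomputable def liftCycle (K : DeltaComplex F n) (z : K.Cell →₀ F) (s f : ℤ)
    (w0 : K.Cell →₀ F) (t : K.Cell → ℤ) : PCell K.Cell →₀ F :=
  (∑ τ ∈ z.support.filter (fun τ => K.tmin τ ≤ max s f ∧ min s f ≤ K.tmax τ),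
      Finsupp.single (PCell.vert τ (t τ)) (z τ))
  + ∑ σ : K.Cell, ∑ k ∈ Finset.Icc (min s f) (max s f - 1),
      Finsupp.single (PCell.horiz σ k)
        ((if s ≤ f then (1 : F) else -1) *
          (w0 σ +
            ∑ τ ∈ z.support.filter (fun τ =>
                (K.tmin τ ≤ max s f ∧ min s f ≤ K.tmax τ) ∧
                  (if s ≤ f then t τ ≤ k else k + 1 ≤ t τ)),
              z τ * (K.bdry τ) σ))

/-- Cells of the cone `K̄ = ω ∗ K`: base simplices, the cone vertex `ω`,
and cone simplices `σ̄ = ω ∗ σ`. -/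
inductive CCell (C : Type) where
  | base : C → CCell C
  | omega : CCell C
  | cone : C → CCell C
deriving DecidableEq

/-- Boundary of a single cell of the cone `K̄`:
`∂σ` for base simplices, `0` for `ω`, and `∂(ω∗σ) = σ − ω∗∂σ` (minus `ω` when `σ` is a
vertex) for cone simplices. -/
noncomputable def ccellBd (K : DeltaComplex F n) : CCell K.Cell → (CCell K.Cell →₀ F)
  | .base σ => (K.bdry σ).sum fun ρ a => Finsupp.single (CCell.base ρ) a
  | .omega => 0
  | .cone σ =>
      Finsupp.single (CCell.base σ) 1
        - (K.bdry σ).sum (fun ρ a => Finsupp.single (CCell.cone ρ) a)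
        - (if K.dim σ = 0 then Finsupp.single CCell.omega 1 else 0)

/-- The boundary of a chain of the cone `K̄`. -/
noncomputable def cbd (K : DeltaComplex F n) (c : CCell K.Cell →₀ F) : CCell K.Cell →₀ F :=
  c.sum fun x a => a • ccellBd K x

/-- The restriction `c ∩ K` of a cone chain to the base simplices, as a chain in `K`. -/
noncomputable def basePart (K : DeltaComplex F n) (c : CCell K.Cell →₀ F) : K.Cell →₀ F :=
  c.sum fun x a =>
    match x with
    | .base σ => Finsupp.single σ a
    | .omega => 0
    | .cone _ => 0

/-- The restriction `c ∩ (K̄ − K)` of a cone chain to the cells not in the base. -/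
noncomputable def conePart (K : DeltaComplex F n) (c : CCell K.Cell →₀ F) :
    CCell K.Cell →₀ F :=
  c.sum fun x a =>
    match x with
    | .base _ => 0
    | .omega => Finsupp.single CCell.omega a
    | .cone ρ => Finsupp.single (CCell.cone ρ) a

/-- The order of the cells of `K̄` in the cone filtration: base simplices by increasing
`min σ`, then `ω`, then cone simplices by decreasing `max σ`, ties broken consistently
so that every prefix is a subcomplex. -/
structure ConeOrder (K : DeltaComplex F n) where
  pos : CCell K.Cell → ℕ
  inj : Function.Injective pos
  base_lt_base : ∀ σ τ : K.Cell, K.tmin σ < K.tmin τ → pos (.base σ) < pos (.base τ)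
  base_lt_omega : ∀ σ : K.Cell, pos (.base σ) < pos .omega
  omega_lt_cone : ∀ σ : K.Cell, pos .omega < pos (.cone σ)
  cone_lt_cone : ∀ σ τ : K.Cell, K.tmax τ < K.tmax σ → pos (.cone σ) < pos (.cone τ)
  faces_first : ∀ x y, (ccellBd K x) y ≠ 0 → pos y < pos x

/-- `σ` is the pivot (lowest nonzero entry) of the column (chain) `c`. -/
def IsLow (K : DeltaComplex F n) (O : ConeOrder K) (c : CCell K.Cell →₀ F)
    (σ : CCell K.Cell) : Prop :=
  c σ ≠ 0 ∧ ∀ ρ, c ρ ≠ 0 → O.pos ρ ≤ O.pos σ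

/-- `R = DV` is a decomposition of the boundary matrix `D` of the cone filtration:
`V` is invertible upper-triangular and `R` is reduced (pivots of nonzero columns lie
in pairwise distinct rows). -/
structure IsReduction (K : DeltaComplex F n) (O : ConeOrder K)
    (R V : CCell K.Cell → (CCell K.Cell →₀ F)) : Prop where
  rdv : ∀ τ, R τ = cbd K (V τ)
  upper : ∀ τ ρ, (V τ) ρ ≠ 0 → O.pos ρ ≤ O.pos τ
  diag : ∀ τ, (V τ) τ ≠ 0
  reduced : ∀ τ τ' σ, τ ≠ τ' → IsLow K O (R τ) σ → ¬ IsLow K O (R τ') σ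

/-- One run of the lazy (standard left-to-right) reduction of the column of `τ`:
starting from a column `c` (with coefficient vector `v`), while the column is nonzero
and its pivot collides with the pivot of an earlier (already reduced) column, subtract
the appropriate scalar multiple of that column. -/
inductive LazyReduces (K : DeltaComplex F n) (O : ConeOrder K)
    (R V : CCell K.Cell → (CCell K.Cell →₀ F)) (τ : CCell K.Cell) :
    (CCell K.Cell →₀ F) → (CCell K.Cell →₀ F) →
      (CCell K.Cell →₀ F) → (CCell K.Cell →₀ F) → Prop
  | done (c v : CCell K.Cell →₀ F)
      (h : ∀ σ, IsLow K O c σ → ∀ τ', O.pos τ' < O.pos τ → ¬ IsLow K O (R τ') σ) :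
      LazyReduces K O R V τ c v c v
  | step (c v c' v' : CCell K.Cell →₀ F) (τ' σ : CCell K.Cell)
      (hlt : O.pos τ' < O.pos τ) (hc : IsLow K O c σ) (hr : IsLow K O (R τ') σ)
      (next : LazyReduces K O R V τ (c - (c σ / ((R τ') σ)) • R τ')
        (v - (c σ / ((R τ') σ)) • V τ') c' v') :
      LazyReduces K O R V τ c v c' v'

/-- `R = DV` is obtained by the lazy reduction: every column `R τ` (with coefficient
column `V τ`) is the result of the lazy reduction of the boundary column of `τ`,
columns being processed from left to right. -/
def IsLazyReduction (K : DeltaComplex F n) (O : ConeOrder K)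
    (R V : CCell K.Cell → (CCell K.Cell →₀ F)) : Prop :=
  ∀ τ, LazyReduces K O R V τ (ccellBd K τ) (Finsupp.single τ 1) (R τ) (V τ)

lemma pcellBd_vert_ne {K : DeltaComplex F n} {y : PCell K.Cell} {σ : K.Cell} {t : ℤ}
    (h : pcellBd K y (PCell.vert σ t) ≠ 0) :
    (∃ τ', y = PCell.vert τ' t ∧ K.bdry τ' σ ≠ 0) ∨
      y = PCell.horiz σ (t - 1) ∨ y = PCell.horiz σ t := by
  cases y with
  | vert τ' i =>
    left
    rw [pcellBd, Finsupp.sum_apply] at h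
    obtain ⟨ρ, hρ, hne⟩ : ∃ ρ ∈ (K.bdry τ').support,
        (Finsupp.single (PCell.vert ρ i) (K.bdry τ' ρ) : PCell K.Cell →₀ F)
          (PCell.vert σ t) ≠ 0 := by
      by_contra hc
      push_neg at hc
      exact h (Finset.sum_eq_zero hc)
    rw [Finsupp.single_apply] at hne
    split_ifs at hne with heq
    · obtain ⟨hρσ, hit⟩ := PCell.vert.inj heq
      subst hρσ; subst hit
      exact ⟨τ', rfl, hne⟩
    · exact absurd rfl hne
  | horiz σ' k =>
    right
    rw [pcellBd] at h
    have hs : ((K.bdry σ').sum fun ρ a =>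
        (Finsupp.single (PCell.horiz ρ k) a : PCell K.Cell →₀ F)) (PCell.vert σ t) = 0 := by
      rw [Finsupp.sum_apply]
      refine Finset.sum_eq_zero fun ρ _ => ?_
      show (Finsupp.single (PCell.horiz ρ k) ((K.bdry σ') ρ) : PCell K.Cell →₀ F)
        (PCell.vert σ t) = 0
      rw [Finsupp.single_apply, if_neg (by simp)]
    rw [Finsupp.sub_apply, Finsupp.sub_apply, hs, sub_zero,
      Finsupp.single_apply, Finsupp.single_apply] at h
    by_cases h1 : PCell.vert σ' (k + 1) = PCell.vert σ t
    · obtain ⟨h1a, h1b⟩ := PCell.vert.inj h1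
      subst h1a
      left
      have : k = t - 1 := by omega
      subst this; rfl
    · rw [if_neg h1] at h
      by_cases h2 : PCell.vert σ' k = PCell.vert σ t
      · obtain ⟨h2a, h2b⟩ := PCell.vert.inj h2
        subst h2a; subst h2b
        right; rfl
      · rw [if_neg h2] at h; simp at h

lemma pbd_vert_tmax_zero (K : DeltaComplex F n) (b d : ℤ) (β : PCell K.Cell →₀ F)
    (hβ : SuppOn β (inSub K b d)) (σ : K.Cell) (hσ : K.tmax σ = b) :
    pbd K β (PCell.vert σ b) = 0 := by
  rw [pbd, Finsupp.sum_apply]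
  refine Finset.sum_eq_zero fun y hy => ?_
  show (β y • pcellBd K y) _ = 0
  rw [Finsupp.smul_apply, smul_eq_mul]
  rcases eq_or_ne (pcellBd K y (PCell.vert σ b)) 0 with h0 | h0
  · rw [h0, mul_zero]
  exfalso
  have hy' := hβ y (Finsupp.mem_support_iff.mp hy)
  rcases pcellBd_vert_ne h0 with ⟨τ', rfl, hb⟩ | rfl | rfl
  · obtain ⟨_, h2⟩ := K.nest τ' σ hb
    simp only [inSub] at hy'
    omega
  · simp only [inSub] at hy'
    omega
  · simp only [inSub] at hy'
    omega

lemma pbd_vert_tmin_zero (K : DeltaComplex F n) (b d : ℤ) (β : PCell K.Cell →₀ F)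
    (hβ : SuppOn β (inSub K b d)) (τ : K.Cell) (hτ : K.tmin τ = d) :
    pbd K β (PCell.vert τ d) = 0 := by
  rw [pbd, Finsupp.sum_apply]
  refine Finset.sum_eq_zero fun y hy => ?_
  show (β y • pcellBd K y) _ = 0
  rw [Finsupp.smul_apply, smul_eq_mul]
  rcases eq_or_ne (pcellBd K y (PCell.vert τ d)) 0 with h0 | h0
  · rw [h0, mul_zero]
  exfalso
  have hy' := hβ y (Finsupp.mem_support_iff.mp hy)
  rcases pcellBd_vert_ne h0 with ⟨τ', rfl, hb⟩ | rfl | rfl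
  · obtain ⟨h1, _⟩ := K.nest τ' τ hb
    simp only [inSub] at hy'
    omega
  · simp only [inSub] at hy'
    omega
  · simp only [inSub] at hy'
    omega

lemma suppOn_false_eq_zero {α : Type} (γ : α →₀ F) (hγ : SuppOn γ fun _ => False) :
    γ = 0 := by
  ext x
  by_contra h
  exact hγ x h

/-- Theorem (open-open apex representatives, `K̂[b,d]`): if an absolute cycle `ẑ` in
`K̂[b,d] = K̂_b^d` contains vertical cells `σ×b` and `τ×d` with `max σ = b` and `min τ = d`,
then `[ẑ]` is neither in the image of `H(K̂[b+1,d]) → H(K̂[b,d])` nor in the image of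
`H(K̂[b,d-1]) → H(K̂[b,d])`. -/
theorem statement_2 {F : Type} [Field F] {n : ℤ} (K : DeltaComplex F n) (b d : ℤ)
    (z : PCell K.Cell →₀ F)
    (hz : RelCycle K (inSub K b d) (fun _ => False) z)
    (σ : K.Cell) (hσ : K.tmax σ = b) (hσz : z (PCell.vert σ b) ≠ 0)
    (τ : K.Cell) (hτ : K.tmin τ = d) (hτz : z (PCell.vert τ d) ≠ 0) :
    ¬ InImg K (inSub K (b + 1) d) (fun _ => False)
        (inSub K b d) (fun _ => False) z ∧
    ¬ InImg K (inSub K b (d - 1)) (fun _ => False)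
        (inSub K b d) (fun _ => False) z := by
  constructor
  · rintro ⟨α, β, γ, ⟨hαA, -⟩, hβ, hγ, heq⟩
    apply hσz
    have hγ0 : γ = 0 := suppOn_false_eq_zero γ hγ
    have hα0 : α (PCell.vert σ b) = 0 := by
      by_contra h
      have := hαA _ h
      simp only [inSub] at this
      omega
    rw [heq, hγ0]
    rw [Finsupp.add_apply, Finsupp.add_apply, hα0,
      pbd_vert_tmax_zero K b d β hβ σ hσ]
    simp
  · rintro ⟨α, β, γ, ⟨hαA, -⟩, hβ, hγ, heq⟩
    apply hτz
    have hγ0 : γ = 0 := suppOn_false_eq_zero γ hγ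
    have hα0 : α (PCell.vert τ d) = 0 := by
      by_contra h
      have := hαA _ h
      simp only [inSub] at this
      omega
    rw [heq, hγ0]
    rw [Finsupp.add_apply, Finsupp.add_apply, hα0,
      pbd_vert_tmin_zero K b d β hβ τ hτ]
    simp
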